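/- arXiv:2007.10149 — 2 statements merged into one kernel-verified Lean document; each statement's English description precedes it below -/
import Mathlib

section
/- Validity of Benders cuts (inequality (10) of the paper): fix t < N and ψ : ℝⁿ → EReal with ψ(x) ≤ Q (t+1) (x) for all x ∈ ℝⁿ. Let x̂ ∈ ℝⁿ be such that (T̂ t ψ)(x̂) is finite, and let μ ∈ ℝⁿ be a subgradient of T̂ t ψ at x̂, i.e. (T̂ t ψ)(x) ≥ (T̂ t ψ)(x̂) + ⟪μ, x − x̂⟫ for all x ∈ ℝⁿ. Then the Benders cut is valid for the true cost-to-go at stage t: (T̂ t ψ)(x̂) + ⟪μ, x − x̂⟫ ≤ Q t (x) for all x ∈ ℝⁿ. -/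
noncomputable section

/-- Mixed-integer lattice: vectors whose first `n₁` coordinates are integers. -/
def mixedLattice (n n₁ : ℕ) : Set (EuclideanSpace ℝ (Fin n)) :=
  {x | ∀ i : Fin n, (i : ℕ) < n₁ → x i ∈ Set.range (Int.cast : ℤ → ℝ)}

/-- Linear stage cost `f t (x, u) = ⟪c t, x⟫ + ⟪d t, u⟫`. -/
def stageCost {n m : ℕ} (c : ℕ → EuclideanSpace ℝ (Fin n)) (d : ℕ → EuclideanSpace ℝ (Fin m))
    (t : ℕ) (x : EuclideanSpace ℝ (Fin n)) (u : EuclideanSpace ℝ (Fin m)) : ℝ :=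
  inner ℝ (c t) x + inner ℝ (d t) u

/-- Generic stage (Bellman) operator with control restriction `SU` and state
restriction `SX`.  The mixed-integer operator `T t` takes `SU = M_u`, `SX = M_x`;
the relaxed operator `T̂ t` takes `SU = Set.univ`, `SX = Set.univ`. -/
def stageOp {n m : ℕ}
    (A : ℕ → EuclideanSpace ℝ (Fin n) →ₗ[ℝ] EuclideanSpace ℝ (Fin n))
    (B : ℕ → EuclideanSpace ℝ (Fin m) →ₗ[ℝ] EuclideanSpace ℝ (Fin n))
    (c : ℕ → EuclideanSpace ℝ (Fin n)) (d : ℕ → EuclideanSpace ℝ (Fin m))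
    (U : ℕ → Set (EuclideanSpace ℝ (Fin m))) (X : ℕ → Set (EuclideanSpace ℝ (Fin n)))
    (SU : Set (EuclideanSpace ℝ (Fin m))) (SX : Set (EuclideanSpace ℝ (Fin n)))
    (t : ℕ) (ψ : EuclideanSpace ℝ (Fin n) → EReal)
    (x : EuclideanSpace ℝ (Fin n)) : EReal :=
  ⨅ u : {u : EuclideanSpace ℝ (Fin m) //
      u ∈ U t ∩ SU ∧ A t x + B t u ∈ X (t + 1) ∩ SX},
    ((stageCost c d t x u.1 : ℝ) : EReal) + ψ (A t x + B t u.1)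

/-- A feasible trajectory of the mixed-integer MPC problem from `xbar`. -/
def FeasTraj {n m : ℕ} (N n₁ m₁ : ℕ)
    (A : ℕ → EuclideanSpace ℝ (Fin n) →ₗ[ℝ] EuclideanSpace ℝ (Fin n))
    (B : ℕ → EuclideanSpace ℝ (Fin m) →ₗ[ℝ] EuclideanSpace ℝ (Fin n))
    (U : ℕ → Set (EuclideanSpace ℝ (Fin m))) (X : ℕ → Set (EuclideanSpace ℝ (Fin n)))
    (xbar : EuclideanSpace ℝ (Fin n))
    (x : Fin (N + 1) → EuclideanSpace ℝ (Fin n))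
    (u : Fin N → EuclideanSpace ℝ (Fin m)) : Prop :=
  x 0 = xbar ∧
  (∀ t : Fin N, x t.succ = A (t : ℕ) (x t.castSucc) + B (t : ℕ) (u t)) ∧
  (∀ t : Fin N, u t ∈ U (t : ℕ) ∩ mixedLattice m m₁) ∧
  (∀ t : Fin (N + 1), 1 ≤ (t : ℕ) → x t ∈ X (t : ℕ) ∩ mixedLattice n n₁)

/-- Optimal value of the mixed-integer MPC problem: infimum (in `EReal`) of the total
stage cost over all feasible trajectories; the infimum over the empty set is `+∞`. -/
def mpcValue {n m : ℕ} (N n₁ m₁ : ℕ)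
    (A : ℕ → EuclideanSpace ℝ (Fin n) →ₗ[ℝ] EuclideanSpace ℝ (Fin n))
    (B : ℕ → EuclideanSpace ℝ (Fin m) →ₗ[ℝ] EuclideanSpace ℝ (Fin n))
    (c : ℕ → EuclideanSpace ℝ (Fin n)) (d : ℕ → EuclideanSpace ℝ (Fin m))
    (U : ℕ → Set (EuclideanSpace ℝ (Fin m))) (X : ℕ → Set (EuclideanSpace ℝ (Fin n)))
    (xbar : EuclideanSpace ℝ (Fin n)) : EReal :=
  ⨅ p : {q : (Fin (N + 1) → EuclideanSpace ℝ (Fin n)) × (Fin N → EuclideanSpace ℝ (Fin m)) //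
      FeasTraj N n₁ m₁ A B U X xbar q.1 q.2},
    ((∑ t : Fin N, stageCost c d (t : ℕ) (p.1.1 t.castSucc) (p.1.2 t) : ℝ) : EReal)

/-! The cut is valid because `T̂ t ψ` is a lower bound for `Q t`: dropping the integrality
constraints enlarges the feasible set of the infimum, and `ψ ≤ Q (t+1)` lowers its objective,
so `T̂ t ψ ≤ T t ψ ≤ T t (Q (t+1)) = Q t`; the subgradient inequality then gives
`(T̂ t ψ)(x̂) + ⟪μ, x - x̂⟫ ≤ (T̂ t ψ)(x) ≤ Q t x`. -/

section StageOp

variable {n m : ℕ}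
  (A : ℕ → EuclideanSpace ℝ (Fin n) →ₗ[ℝ] EuclideanSpace ℝ (Fin n))
  (B : ℕ → EuclideanSpace ℝ (Fin m) →ₗ[ℝ] EuclideanSpace ℝ (Fin n))
  (c : ℕ → EuclideanSpace ℝ (Fin n)) (d : ℕ → EuclideanSpace ℝ (Fin m))
  (U : ℕ → Set (EuclideanSpace ℝ (Fin m))) (X : ℕ → Set (EuclideanSpace ℝ (Fin n)))
  (t : ℕ)

theorem stageOp_antitone_restriction {SU SU' : Set (EuclideanSpace ℝ (Fin m))}
    {SX SX' : Set (EuclideanSpace ℝ (Fin n))} (hSU : SU ⊆ SU') (hSX : SX ⊆ SX')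
    (ψ : EuclideanSpace ℝ (Fin n) → EReal) (x : EuclideanSpace ℝ (Fin n)) :
    stageOp A B c d U X SU' SX' t ψ x ≤ stageOp A B c d U X SU SX t ψ x :=
  le_iInf fun ⟨u, ⟨hUt, hSUu⟩, hXt, hSXx⟩ =>
    iInf_le_of_le ⟨u, ⟨hUt, hSU hSUu⟩, hXt, hSX hSXx⟩ le_rfl

theorem stageOp_mono (SU : Set (EuclideanSpace ℝ (Fin m))) (SX : Set (EuclideanSpace ℝ (Fin n)))
    {ψ φ : EuclideanSpace ℝ (Fin n) → EReal} (hψφ : ψ ≤ φ) :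
    stageOp A B c d U X SU SX t ψ ≤ stageOp A B c d U X SU SX t φ := fun _ =>
  iInf_mono fun _ => add_le_add le_rfl (hψφ _)

theorem relaxed_stageOp_le (SU : Set (EuclideanSpace ℝ (Fin m)))
    (SX : Set (EuclideanSpace ℝ (Fin n))) {ψ φ : EuclideanSpace ℝ (Fin n) → EReal}
    (hψφ : ψ ≤ φ) (x : EuclideanSpace ℝ (Fin n)) :
    stageOp A B c d U X Set.univ Set.univ t ψ x ≤ stageOp A B c d U X SU SX t φ x :=
  (stageOp_antitone_restriction A B c d U X t (Set.subset_univ SU) (Set.subset_univ SX) ψ x).trans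
    (stageOp_mono A B c d U X t SU SX hψφ x)

end StageOp

theorem benders_cut_valid_general
    {n m : ℕ} (n₁ m₁ : ℕ) (N : ℕ)
    (A : ℕ → EuclideanSpace ℝ (Fin n) →ₗ[ℝ] EuclideanSpace ℝ (Fin n))
    (B : ℕ → EuclideanSpace ℝ (Fin m) →ₗ[ℝ] EuclideanSpace ℝ (Fin n))
    (c : ℕ → EuclideanSpace ℝ (Fin n)) (d : ℕ → EuclideanSpace ℝ (Fin m))
    (U : ℕ → Set (EuclideanSpace ℝ (Fin m))) (X : ℕ → Set (EuclideanSpace ℝ (Fin n)))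
    (Q : ℕ → EuclideanSpace ℝ (Fin n) → EReal)
    (hQrec : ∀ t < N, ∀ x, Q t x =
      stageOp A B c d U X (mixedLattice m m₁) (mixedLattice n n₁) t (Q (t + 1)) x)
    (t : ℕ) (ht : t < N) (ψ : EuclideanSpace ℝ (Fin n) → EReal)
    (hψ : ∀ x, ψ x ≤ Q (t + 1) x)
    (xhat : EuclideanSpace ℝ (Fin n))
    (μ : EuclideanSpace ℝ (Fin n))
    (hsub : ∀ x, stageOp A B c d U X Set.univ Set.univ t ψ x ≥
      stageOp A B c d U X Set.univ Set.univ t ψ xhat + ((inner ℝ μ (x - xhat) : ℝ) : EReal)) :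
    ∀ x : EuclideanSpace ℝ (Fin n),
      stageOp A B c d U X Set.univ Set.univ t ψ xhat + ((inner ℝ μ (x - xhat) : ℝ) : EReal) ≤
        Q t x := fun x =>
  calc _ ≤ stageOp A B c d U X Set.univ Set.univ t ψ x := hsub x
    _ ≤ stageOp A B c d U X (mixedLattice m m₁) (mixedLattice n n₁) t (Q (t + 1)) x :=
        relaxed_stageOp_le A B c d U X t _ _ hψ x
    _ = Q t x := (hQrec t ht x).symm

/-- Validity of Benders cuts, inequality (10) of the paper.  If
`ψ ≤ Q (t+1)` pointwise, `x̂` is a point where the relaxed stage value `(T̂ t ψ)(x̂)` is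
finite, and `μ` is a subgradient of `T̂ t ψ` at `x̂`, then the Benders cut
`(T̂ t ψ)(x̂) + ⟪μ, x − x̂⟫` underestimates the true cost-to-go `Q t` everywhere. -/
theorem benders_cut_valid
    {n m : ℕ} (n₁ n₂ m₁ m₂ : ℕ) (hn : n = n₁ + n₂) (hm : m = m₁ + m₂) (N : ℕ)
    (A : ℕ → EuclideanSpace ℝ (Fin n) →ₗ[ℝ] EuclideanSpace ℝ (Fin n))
    (B : ℕ → EuclideanSpace ℝ (Fin m) →ₗ[ℝ] EuclideanSpace ℝ (Fin n))
    (c : ℕ → EuclideanSpace ℝ (Fin n)) (d : ℕ → EuclideanSpace ℝ (Fin m))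
    (U : ℕ → Set (EuclideanSpace ℝ (Fin m))) (X : ℕ → Set (EuclideanSpace ℝ (Fin n)))
    (Q : ℕ → EuclideanSpace ℝ (Fin n) → EReal)
    (hQN : ∀ x, Q N x = 0)
    (hQrec : ∀ t < N, ∀ x, Q t x =
      stageOp A B c d U X (mixedLattice m m₁) (mixedLattice n n₁) t (Q (t + 1)) x)
    (t : ℕ) (ht : t < N) (ψ : EuclideanSpace ℝ (Fin n) → EReal)
    (hψ : ∀ x, ψ x ≤ Q (t + 1) x)
    (xhat : EuclideanSpace ℝ (Fin n))
    (hfin_top : stageOp A B c d U X Set.univ Set.univ t ψ xhat ≠ ⊤)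
    (hfin_bot : stageOp A B c d U X Set.univ Set.univ t ψ xhat ≠ ⊥)
    (μ : EuclideanSpace ℝ (Fin n))
    (hsub : ∀ x, stageOp A B c d U X Set.univ Set.univ t ψ x ≥
      stageOp A B c d U X Set.univ Set.univ t ψ xhat + ((inner ℝ μ (x - xhat) : ℝ) : EReal)) :
    ∀ x : EuclideanSpace ℝ (Fin n),
      stageOp A B c d U X Set.univ Set.univ t ψ xhat + ((inner ℝ μ (x - xhat) : ℝ) : EReal) ≤
        Q t x :=
  benders_cut_valid_general n₁ m₁ N A B c d U X Q hQrec t ht ψ hψ xhat μ hsub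
end
end

section
/- Validity of multi-scale (block) Benders cuts: fix stages t < t' ≤ N. Define the block mixed-integer operator (T_{[t,t')} ψ)(x) as the infimum of ∑_{s=t}^{t'−1} f s (x s, u s) + ψ(x t') over all inner trajectories with x t = x, x (s+1) = A s (x s) + B s (u s), u s ∈ 𝒰 s ∩ M_u for t ≤ s < t', and x s ∈ 𝒳 s ∩ M_x for t < s ≤ t'; define the relaxed block operator T̂_{[t,t')} by the same formula with the integrality sets M_u, M_x dropped. Suppose ψ : ℝⁿ → EReal satisfies ψ ≤ Q t' pointwise, let x̂ ∈ ℝⁿ with (T̂_{[t,t')} ψ)(x̂) finite, and let μ ∈ ℝⁿ be a subgradient of T̂_{[t,t')} ψ at x̂. Then the block Benders cut is valid: (T̂_{[t,t')} ψ)(x̂) + ⟪μ, x − x̂⟫ ≤ Q t (x) for all x ∈ ℝⁿ. -/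
/-!
The relaxed block value at a state is at most the cost of any admissible first move plus the
relaxed block value, one stage shorter, at the resulting state (prepend that move to a
trajectory of the shorter block), and dropping the integrality constraints only enlarges the
feasible sets of the Bellman recursion for `Q`. Backward induction from `ψ ≤ Q t'` therefore
gives `T̂_{[s,t')} ψ ≤ Q s` for every `s ≤ t'`, and the cut is the subgradient inequality
followed by this bound at `s = t`.
-/

noncomputable section



/-- Block (multi-scale) stage operator over the stages `t, t+1, …, t'−1` with control
restriction `SU` and state restriction `SX`: the mixed-integer block operator
`T_{[t,t')}` takes `SU = M_u`, `SX = M_x`, the relaxed block operator `T̂_{[t,t')}` takes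
`SU = Set.univ`, `SX = Set.univ`. -/
def blockOp {n m : ℕ}
    (A : ℕ → EuclideanSpace ℝ (Fin n) →ₗ[ℝ] EuclideanSpace ℝ (Fin n))
    (B : ℕ → EuclideanSpace ℝ (Fin m) →ₗ[ℝ] EuclideanSpace ℝ (Fin n))
    (c : ℕ → EuclideanSpace ℝ (Fin n)) (d : ℕ → EuclideanSpace ℝ (Fin m))
    (U : ℕ → Set (EuclideanSpace ℝ (Fin m))) (X : ℕ → Set (EuclideanSpace ℝ (Fin n)))
    (SU : Set (EuclideanSpace ℝ (Fin m))) (SX : Set (EuclideanSpace ℝ (Fin n)))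
    (t t' : ℕ) (ψ : EuclideanSpace ℝ (Fin n) → EReal)
    (x : EuclideanSpace ℝ (Fin n)) : EReal :=
  ⨅ p : {q : (ℕ → EuclideanSpace ℝ (Fin n)) × (ℕ → EuclideanSpace ℝ (Fin m)) //
      q.1 t = x ∧
      (∀ s, t ≤ s → s < t' → q.1 (s + 1) = A s (q.1 s) + B s (q.2 s)) ∧
      (∀ s, t ≤ s → s < t' → q.2 s ∈ U s ∩ SU) ∧
      (∀ s, t < s → s ≤ t' → q.1 s ∈ X s ∩ SX)},
    ((∑ s ∈ Finset.Ico t t', stageCost c d s (p.1.1 s) (p.1.2 s) : ℝ) : EReal) + ψ (p.1.1 t')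

theorem EReal.le_coe_add_iInf {ι : Sort*} {a : EReal} {r : ℝ} {g : ι → EReal}
    (h : ∀ i, a ≤ r + g i) : a ≤ r + ⨅ i, g i := by
  have hsub : ∀ b : EReal, a - r ≤ b ↔ a ≤ r + b := fun b => by
    rw [EReal.sub_le_iff_le_add (.inl (EReal.coe_ne_bot r)) (.inl (EReal.coe_ne_top r)),
      add_comm]
  exact (hsub _).1 (le_iInf fun i => (hsub _).2 (h i))

section BlockOperator

variable {n m : ℕ}
  {A : ℕ → EuclideanSpace ℝ (Fin n) →ₗ[ℝ] EuclideanSpace ℝ (Fin n)}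
  {B : ℕ → EuclideanSpace ℝ (Fin m) →ₗ[ℝ] EuclideanSpace ℝ (Fin n)}
  {c : ℕ → EuclideanSpace ℝ (Fin n)} {d : ℕ → EuclideanSpace ℝ (Fin m)}
  {U : ℕ → Set (EuclideanSpace ℝ (Fin m))} {X : ℕ → Set (EuclideanSpace ℝ (Fin n))}

theorem stageOp_anti {SU SU' : Set (EuclideanSpace ℝ (Fin m))}
    {SX SX' : Set (EuclideanSpace ℝ (Fin n))} (hSU : SU ⊆ SU') (hSX : SX ⊆ SX') (t : ℕ)
    {φ ψ : EuclideanSpace ℝ (Fin n) → EReal} (hφψ : φ ≤ ψ) (x : EuclideanSpace ℝ (Fin n)) :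
    stageOp A B c d U X SU' SX' t φ x ≤ stageOp A B c d U X SU SX t ψ x :=
  iInf_mono' fun u =>
    ⟨⟨u.1, Set.inter_subset_inter_right _ hSU u.2.1,
        Set.inter_subset_inter_right _ hSX u.2.2⟩,
      add_le_add_right (hφψ _) _⟩

theorem blockOp_self_le (SU : Set (EuclideanSpace ℝ (Fin m)))
    (SX : Set (EuclideanSpace ℝ (Fin n))) (t : ℕ) (ψ : EuclideanSpace ℝ (Fin n) → EReal)
    (x : EuclideanSpace ℝ (Fin n)) : blockOp A B c d U X SU SX t t ψ x ≤ ψ x := by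
  refine (iInf_le _ ⟨(fun _ => x, fun _ => 0), rfl, fun s h h' => ?_, fun s h h' => ?_,
    fun s h h' => ?_⟩).trans_eq (by simp) <;> omega

theorem blockOp_le_stageOp_blockOp {SU : Set (EuclideanSpace ℝ (Fin m))}
    {SX : Set (EuclideanSpace ℝ (Fin n))} {t t' : ℕ} (htt' : t < t')
    (ψ : EuclideanSpace ℝ (Fin n) → EReal) (x : EuclideanSpace ℝ (Fin n)) :
    blockOp A B c d U X SU SX t t' ψ x ≤
      stageOp A B c d U X SU SX t (blockOp A B c d U X SU SX (t + 1) t' ψ) x := by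
  refine le_iInf fun u => EReal.le_coe_add_iInf fun p => ?_
  obtain ⟨u, hu, hxu⟩ := u
  obtain ⟨⟨xs, us⟩, hstart, hdyn, hU, hX⟩ := p
  dsimp only at hstart hdyn hU hX ⊢
  set xs' := Function.update xs t x
  set us' := Function.update us t u
  have hfeas : xs' t = x ∧
      (∀ s, t ≤ s → s < t' → xs' (s + 1) = A s (xs' s) + B s (us' s)) ∧
      (∀ s, t ≤ s → s < t' → us' s ∈ U s ∩ SU) ∧
      (∀ s, t < s → s ≤ t' → xs' s ∈ X s ∩ SX) := by
    refine ⟨by simp [xs'], fun s hts hst => ?_, fun s hts hst => ?_, fun s hts hst => ?_⟩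
    · rcases hts.eq_or_lt with rfl | hts
      · simpa [xs', us'] using hstart
      · simpa [xs', us', hts.ne', (hts.trans (Nat.lt_succ_self s)).ne'] using hdyn s hts hst
    · rcases hts.eq_or_lt with rfl | hts
      · simpa [us'] using hu
      · simpa [us', hts.ne'] using hU s hts hst
    · rcases (Nat.succ_le_of_lt hts).eq_or_lt with rfl | hts'
      · simpa [xs', hstart] using hxu
      · simpa [xs', hts.ne'] using hX s hts' hst
  refine (iInf_le _ ⟨(xs', us'), hfeas⟩).trans_eq ?_
  have hcost : ∑ s ∈ Finset.Ico t t', stageCost c d s (xs' s) (us' s) =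
      stageCost c d t x u + ∑ s ∈ Finset.Ico (t + 1) t', stageCost c d s (xs s) (us s) := by
    rw [Finset.sum_eq_sum_Ico_succ_bot htt']
    refine congrArg₂ _ (by simp [xs', us']) (Finset.sum_congr rfl fun s hs => ?_)
    simp [xs', us', (Nat.lt_of_succ_le (Finset.mem_Ico.mp hs).1).ne']
  simp only [hcost, EReal.coe_add, add_assoc, xs', Function.update_of_ne htt'.ne']

theorem blockOp_le_costToGo {SU₀ SU : Set (EuclideanSpace ℝ (Fin m))}
    {SX₀ SX : Set (EuclideanSpace ℝ (Fin n))} (hSU : SU₀ ⊆ SU) (hSX : SX₀ ⊆ SX) {N : ℕ}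
    {Q : ℕ → EuclideanSpace ℝ (Fin n) → EReal}
    (hQrec : ∀ t < N, ∀ x, Q t x = stageOp A B c d U X SU₀ SX₀ t (Q (t + 1)) x)
    {t t' : ℕ} (htt' : t ≤ t') (ht'N : t' ≤ N) {ψ : EuclideanSpace ℝ (Fin n) → EReal}
    (hψ : ∀ x, ψ x ≤ Q t' x) (x : EuclideanSpace ℝ (Fin n)) :
    blockOp A B c d U X SU SX t t' ψ x ≤ Q t x := by
  induction htt' using Nat.decreasingInduction generalizing x with
  | self => exact (blockOp_self_le SU SX t' ψ x).trans (hψ x)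
  | of_succ k hk ih =>
    calc blockOp A B c d U X SU SX k t' ψ x
        ≤ stageOp A B c d U X SU SX k (blockOp A B c d U X SU SX (k + 1) t' ψ) x :=
          blockOp_le_stageOp_blockOp hk ψ x
      _ ≤ stageOp A B c d U X SU₀ SX₀ k (Q (k + 1)) x := stageOp_anti hSU hSX k ih x
      _ = Q k x := (hQrec k (hk.trans_le ht'N) x).symm

end BlockOperator

theorem block_benders_cut_valid_general
    {n m : ℕ} (n₁ m₁ : ℕ) (N : ℕ)
    (A : ℕ → EuclideanSpace ℝ (Fin n) →ₗ[ℝ] EuclideanSpace ℝ (Fin n))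
    (B : ℕ → EuclideanSpace ℝ (Fin m) →ₗ[ℝ] EuclideanSpace ℝ (Fin n))
    (c : ℕ → EuclideanSpace ℝ (Fin n)) (d : ℕ → EuclideanSpace ℝ (Fin m))
    (U : ℕ → Set (EuclideanSpace ℝ (Fin m))) (X : ℕ → Set (EuclideanSpace ℝ (Fin n)))
    (Q : ℕ → EuclideanSpace ℝ (Fin n) → EReal)
    (hQrec : ∀ t < N, ∀ x, Q t x =
      stageOp A B c d U X (mixedLattice m m₁) (mixedLattice n n₁) t (Q (t + 1)) x)
    (t t' : ℕ) (htt' : t < t') (ht'N : t' ≤ N)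
    (ψ : EuclideanSpace ℝ (Fin n) → EReal)
    (hψ : ∀ x, ψ x ≤ Q t' x)
    (xhat : EuclideanSpace ℝ (Fin n))
    (μ : EuclideanSpace ℝ (Fin n))
    (hsub : ∀ x, blockOp A B c d U X Set.univ Set.univ t t' ψ x ≥
      blockOp A B c d U X Set.univ Set.univ t t' ψ xhat + ((inner ℝ μ (x - xhat) : ℝ) : EReal)) :
    ∀ x : EuclideanSpace ℝ (Fin n),
      blockOp A B c d U X Set.univ Set.univ t t' ψ xhat + ((inner ℝ μ (x - xhat) : ℝ) : EReal) ≤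
        Q t x :=
  fun x => (hsub x).trans <|
    blockOp_le_costToGo (Set.subset_univ _) (Set.subset_univ _) hQrec htt'.le ht'N hψ x

/-- Validity of multi-scale (block) Benders cuts.  For stages
`t < t' ≤ N`, if `ψ ≤ Q t'` pointwise, `(T̂_{[t,t')} ψ)(x̂)` is finite and `μ` is a
subgradient of `T̂_{[t,t')} ψ` at `x̂`, then the block Benders cut underestimates the
true cost-to-go `Q t` everywhere. -/
theorem block_benders_cut_valid
    {n m : ℕ} (n₁ n₂ m₁ m₂ : ℕ) (hn : n = n₁ + n₂) (hm : m = m₁ + m₂) (N : ℕ)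
    (A : ℕ → EuclideanSpace ℝ (Fin n) →ₗ[ℝ] EuclideanSpace ℝ (Fin n))
    (B : ℕ → EuclideanSpace ℝ (Fin m) →ₗ[ℝ] EuclideanSpace ℝ (Fin n))
    (c : ℕ → EuclideanSpace ℝ (Fin n)) (d : ℕ → EuclideanSpace ℝ (Fin m))
    (U : ℕ → Set (EuclideanSpace ℝ (Fin m))) (X : ℕ → Set (EuclideanSpace ℝ (Fin n)))
    (Q : ℕ → EuclideanSpace ℝ (Fin n) → EReal)
    (hQN : ∀ x, Q N x = 0)
    (hQrec : ∀ t < N, ∀ x, Q t x =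
      stageOp A B c d U X (mixedLattice m m₁) (mixedLattice n n₁) t (Q (t + 1)) x)
    (t t' : ℕ) (htt' : t < t') (ht'N : t' ≤ N)
    (ψ : EuclideanSpace ℝ (Fin n) → EReal)
    (hψ : ∀ x, ψ x ≤ Q t' x)
    (xhat : EuclideanSpace ℝ (Fin n))
    (hfin_top : blockOp A B c d U X Set.univ Set.univ t t' ψ xhat ≠ ⊤)
    (hfin_bot : blockOp A B c d U X Set.univ Set.univ t t' ψ xhat ≠ ⊥)
    (μ : EuclideanSpace ℝ (Fin n))
    (hsub : ∀ x, blockOp A B c d U X Set.univ Set.univ t t' ψ x ≥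
      blockOp A B c d U X Set.univ Set.univ t t' ψ xhat + ((inner ℝ μ (x - xhat) : ℝ) : EReal)) :
    ∀ x : EuclideanSpace ℝ (Fin n),
      blockOp A B c d U X Set.univ Set.univ t t' ψ xhat + ((inner ℝ μ (x - xhat) : ℝ) : EReal) ≤
        Q t x :=
  block_benders_cut_valid_general n₁ m₁ N A B c d U X Q hQrec t t' htt' ht'N ψ hψ xhat μ hsub
end
end
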